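/- arXiv:1001.4987 — 4 statements merged into one kernel-verified Lean document; each statement's English description precedes it below -/
import Mathlib

section
/- Let R ⊆ {0,1}^r be a Boolean relation. If R_= ≤ppp R, or R_≠ ≤ppp R, or R_→ ≤ppp R, then R 3-simulates equality. -/
/-- A Boolean relation of arity `r`: a set of bit-tuples of length `r`. -/
abbrev BoolRel (r : ℕ) := Set (Fin r → Bool)

/-- The unary constant relation `{0}`. -/
def Rzero : BoolRel 1 := {a | a 0 = false}

/-- The unary constant relation `{1}`. -/
def Rone : BoolRel 1 := {a | a 0 = true}

/-- A constraint over a variable set `V`: a Boolean relation together with a scope. -/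
structure Constraint (V : Type) where
  arity : ℕ
  rel : BoolRel arity
  scope : Fin arity → V

/-- An assignment satisfies a constraint if the scoped tuple lies in the relation. -/
def Constraint.sat {V : Type} (c : Constraint V) (σ : V → Bool) : Prop :=
  (fun i => σ (c.scope i)) ∈ c.rel

/-- A CSP instance: a collection of constraints over a variable set `V`. -/
structure CSPInstance (V : Type) where
  constraints : List (Constraint V)

/-- An assignment satisfies an instance if it satisfies every constraint. -/
def CSPInstance.sat {V : Type} (I : CSPInstance V) (σ : V → Bool) : Prop :=
  ∀ c ∈ I.constraints, c.sat σ

/-- An instance is over the constraint language `Γ` if every constraint uses a relation of `Γ`. -/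
def CSPInstance.over {V : Type} (I : CSPInstance V) (Γ : Set (Σ r, BoolRel r)) : Prop :=
  ∀ c ∈ I.constraints, (⟨c.arity, c.rel⟩ : Σ r, BoolRel r) ∈ Γ

/-- The degree of a variable: the number of occurrences among the scopes of the constraints. -/
def varDegree {V : Type} [DecidableEq V] (I : CSPInstance V) (v : V) : ℕ :=
  (I.constraints.map fun c => (Finset.univ.filter fun i => c.scope i = v).card).sum

/-- The language `{R_zero, R_one}` of pins. -/
def pinLang : Set (Σ r, BoolRel r) := {⟨1, Rzero⟩, ⟨1, Rone⟩}

/-- `Γ` `d`-simulates the `k`-ary equality relation. -/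
def simulatesEqK (Γ : Set (Σ r, BoolRel r)) (d k : ℕ) : Prop :=
  ∃ (ℓ : ℕ), k ≤ ℓ ∧ ∃ I : CSPInstance (Fin ℓ),
    I.over (Γ ∪ pinLang) ∧
    (∀ v : Fin ℓ, varDegree I v ≤ d) ∧
    (∀ v : Fin ℓ, (v : ℕ) < k → varDegree I v ≤ d - 1) ∧
    ∃ m : ℕ, 1 ≤ m ∧
      Nat.card {σ : Fin ℓ → Bool | I.sat σ ∧ ∀ v : Fin ℓ, (v : ℕ) < k → σ v = false} = m ∧
      Nat.card {σ : Fin ℓ → Bool | I.sat σ ∧ ∀ v : Fin ℓ, (v : ℕ) < k → σ v = true} = m ∧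
      (∀ σ : Fin ℓ → Bool, I.sat σ →
        (∀ v : Fin ℓ, (v : ℕ) < k → σ v = false) ∨ (∀ v : Fin ℓ, (v : ℕ) < k → σ v = true))

/-- `Γ` `d`-simulates equality: it `d`-simulates `Eq_k` for every `k ≥ 2`. -/
def simulatesEq (Γ : Set (Σ r, BoolRel r)) (d : ℕ) : Prop :=
  ∀ k : ℕ, 2 ≤ k → simulatesEqK Γ d k

/-- A single relation `d`-simulates equality if the language `{R}` does. -/
def relSimulatesEq {r : ℕ} (R : BoolRel r) (d : ℕ) : Prop :=
  simulatesEq {⟨r, R⟩} d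

/-- OR-conj relations: definable by a conjunction of pins and ORs (of any arity ≥ 1). -/
def ORConj {r : ℕ} (R : BoolRel r) : Prop :=
  ∃ (P : Set (Fin r × Bool)) (Cl : Set (Set (Fin r))),
    (∀ C ∈ Cl, C.Nonempty) ∧
    ∀ a : Fin r → Bool, a ∈ R ↔
      ((∀ p ∈ P, a p.1 = p.2) ∧ (∀ C ∈ Cl, ∃ i ∈ C, a i = true))

/-- NAND-conj relations: definable by a conjunction of pins and NANDs (of any arity ≥ 1). -/
def NANDConj {r : ℕ} (R : BoolRel r) : Prop :=
  ∃ (P : Set (Fin r × Bool)) (Cl : Set (Set (Fin r))),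
    (∀ C ∈ Cl, C.Nonempty) ∧
    ∀ a : Fin r → Bool, a ∈ R ↔
      ((∀ p ∈ P, a p.1 = p.2) ∧ (∀ C ∈ Cl, ∃ i ∈ C, a i = false))

/-- One step of ppp-definability: permutation of columns, pinning, or projection. -/
inductive pppStep : (Σ r, BoolRel r) → (Σ r, BoolRel r) → Prop
  | perm {r : ℕ} (R : BoolRel r) (π : Equiv.Perm (Fin r)) :
      pppStep ⟨r, R⟩ ⟨r, {a | (fun i => a (π i)) ∈ R}⟩
  | pin {r : ℕ} (R : BoolRel r) (i : Fin r) (c : Bool) :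
      pppStep ⟨r, R⟩ ⟨r, {a | a ∈ R ∧ a i = c}⟩
  | proj {r : ℕ} (R : BoolRel (r + 1)) (i : Fin (r + 1)) :
      pppStep ⟨r + 1, R⟩ ⟨r, {a | ∃ b ∈ R, a = fun j => b (i.succAbove j)}⟩

/-- `R ≤ppp R'`: `R` is obtained from `R'` by a sequence of ppp operations. -/
def pppLE {r r' : ℕ} (R : BoolRel r) (R' : BoolRel r') : Prop :=
  Relation.ReflTransGen pppStep ⟨r', R'⟩ ⟨r, R⟩

def Req : BoolRel 2 := {a | a 0 = a 1}
def Rneq : BoolRel 2 := {a | a 0 ≠ a 1}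
def Rimp : BoolRel 2 := {a | a 0 = true → a 1 = true}
def ROR : BoolRel 2 := {a | a 0 = true ∨ a 1 = true}
def RNAND : BoolRel 2 := {a | a 0 = false ∨ a 1 = false}
def ORk (k : ℕ) : BoolRel k := {a | ∃ i, a i = true}
def NANDk (k : ℕ) : BoolRel k := {a | ∃ i, a i = false}

/-- `R₀ + R₁ = {0a : a ∈ R₀} ∪ {1a : a ∈ R₁}`. -/
def relSum {r : ℕ} (R0 R1 : BoolRel r) : BoolRel (r + 1) :=
  {a | (a 0 = false ∧ (fun i => a i.succ) ∈ R0) ∨ (a 0 = true ∧ (fun i => a i.succ) ∈ R1)}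

/-- Column `i` of `R` is constant. -/
def constCol {r : ℕ} (R : BoolRel r) (i : Fin r) : Prop :=
  ∀ a ∈ R, ∀ b ∈ R, a i = b i


/-- Affine relations: solution sets of systems of linear equations over GF(2). -/
def AffineRel {r : ℕ} (R : BoolRel r) : Prop :=
  ∃ E : Set (Finset (Fin r) × Bool),
    ∀ a : Fin r → Bool, a ∈ R ↔
      ∀ e ∈ E, (∑ i ∈ e.1, (if a i then (1 : ZMod 2) else 0)) = (if e.2 then (1 : ZMod 2) else 0)

/-- IM-conj relations: definable by a conjunction of pins and binary implications. -/
def IMConj {r : ℕ} (R : BoolRel r) : Prop :=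
  ∃ (P : Set (Fin r × Bool)) (Imp : Set (Fin r × Fin r)),
    ∀ a : Fin r → Bool, a ∈ R ↔
      ((∀ p ∈ P, a p.1 = p.2) ∧ (∀ q ∈ Imp, a q.1 = true → a q.2 = true))

/-- Pointwise order on bit-tuples. -/
def leTuple {r : ℕ} (a b : Fin r → Bool) : Prop := ∀ i, a i = true → b i = true

/-- A relation is monotone if it is upward closed. -/
def MonotoneRel {r : ℕ} (R : BoolRel r) : Prop := ∀ a ∈ R, ∀ b, leTuple a b → b ∈ R

/-- A relation is antitone if it is downward closed. -/
def AntitoneRel {r : ℕ} (R : BoolRel r) : Prop := ∀ a ∈ R, ∀ b, leTuple b a → b ∈ R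

/-- Pseudo-monotone: the restriction to non-constant columns is monotone. -/
def PseudoMonotone {r : ℕ} (R : BoolRel r) : Prop :=
  ∀ a ∈ R, ∀ b : Fin r → Bool,
    (∀ i, constCol R i → b i = a i) →
    (∀ i, ¬ constCol R i → a i = true → b i = true) → b ∈ R

/-- Pseudo-antitone: the restriction to non-constant columns is antitone. -/
def PseudoAntitone {r : ℕ} (R : BoolRel r) : Prop :=
  ∀ a ∈ R, ∀ b : Fin r → Bool,
    (∀ i, constCol R i → b i = a i) →
    (∀ i, ¬ constCol R i → b i = true → a i = true) → b ∈ R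

/-- Bit-wise complement of a relation. -/
def bwcomp {r : ℕ} (R : BoolRel r) : BoolRel r := {a | (fun i => !(a i)) ∈ R}

/-- `(P, Cl)` is a normalized OR-conj formula defining `R`: pins `P`, OR-clauses `Cl`
(distinct arguments, size ≥ 2, no pinned variable in a clause, antichain of clauses). -/
def NormalizedOR {r : ℕ} (R : BoolRel r) (P : Set (Fin r × Bool))
    (Cl : Set (Finset (Fin r))) : Prop :=
  (∀ a : Fin r → Bool, a ∈ R ↔
      ((∀ p ∈ P, a p.1 = p.2) ∧ (∀ C ∈ Cl, ∃ i ∈ C, a i = true))) ∧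
  (∀ p ∈ P, ∀ C ∈ Cl, p.1 ∉ C) ∧
  (∀ C ∈ Cl, 2 ≤ C.card) ∧
  (∀ C ∈ Cl, ∀ C' ∈ Cl, C ⊆ C' → C = C')

/-- `(P, Cl)` is a normalized NAND-conj formula defining `R`. -/
def NormalizedNAND {r : ℕ} (R : BoolRel r) (P : Set (Fin r × Bool))
    (Cl : Set (Finset (Fin r))) : Prop :=
  (∀ a : Fin r → Bool, a ∈ R ↔
      ((∀ p ∈ P, a p.1 = p.2) ∧ (∀ C ∈ Cl, ∃ i ∈ C, a i = false))) ∧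
  (∀ p ∈ P, ∀ C ∈ Cl, p.1 ∉ C) ∧
  (∀ C ∈ Cl, 2 ≤ C.card) ∧
  (∀ C ∈ Cl, ∀ C' ∈ Cl, C ⊆ C' → C = C')

/-!
A ppp-definition of `Q ∈ {R₌, R_≠, R_→}` from `R` exhibits two columns `i ≠ j` and a set of
pins under which every tuple of `R` reads a pair of `Q` on `(i, j)`. Adding pins greedily, as
long as both pairs `(c, c ⊕ f)` stay realised (`f = 1` for `R_≠`, `f = 0` otherwise), makes each
of them extend to a unique tuple of `R`. Now place `2k` copies of `R` around a cycle, column `j`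
of each copy sharing its variable with column `i` of the next, all other columns fresh and
pinned. Two consecutive copies compose to an implication, so the `k` variables at even
positions are equal; once their common value is fixed, every copy is one of the two unique
tuples, so each value has exactly one solution. Cycle variables occur twice, fresh ones at most
three times.
-/

open Finset Function

section Pins

variable {ι : Type*}

def cube (P : Finset (ι × Bool)) : Set (ι → Bool) := {b | ∀ p ∈ P, b p.1 = p.2}

theorem cube_anti {P Q : Finset (ι × Bool)} (h : P ⊆ Q) : cube Q ⊆ cube P :=
  fun _ hb p hp => hb p (h hp)

@[simp]
theorem mem_cube_insert [DecidableEq ι] {P : Finset (ι × Bool)} {p : ι × Bool} {b : ι → Bool} :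
    b ∈ cube (insert p P) ↔ b p.1 = p.2 ∧ b ∈ cube P :=
  Finset.forall_mem_insert _ _ _

/-- Take `Q ⊇ P` of maximal size keeping every `A c ∩ cube Q` nonempty: were there two tuples
of `A c ∩ cube Q` differing at `t`, the pin `(t, b t)` for some `b ∈ A (!c) ∩ cube Q` could
still be added. -/
theorem exists_superset_inter_cube_eq_singleton [Fintype ι] [DecidableEq ι]
    (A : Bool → Set (ι → Bool)) (P : Finset (ι × Bool)) (hA : ∀ c, (A c ∩ cube P).Nonempty) :
    ∃ Q, P ⊆ Q ∧ ∀ c, ∃ a, A c ∩ cube Q = {a} := by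
  classical
  let good : Finset (Finset (ι × Bool)) :=
    univ.filter fun Q => P ⊆ Q ∧ ∀ c, (A c ∩ cube Q).Nonempty
  obtain ⟨Q, hQ, hmax⟩ := good.exists_max_image card ⟨P, by simp [good, hA]⟩
  simp only [good, mem_filter, mem_univ, true_and] at hQ hmax
  refine ⟨Q, hQ.1, fun c => ?_⟩
  obtain ⟨a, ha⟩ := hQ.2 c
  refine ⟨a, Set.Subsingleton.eq_singleton_of_mem (fun a₁ ha₁ a₂ ha₂ => ?_) ha⟩
  by_contra hne
  obtain ⟨t, ht⟩ := Function.ne_iff.1 hne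
  obtain ⟨b, hbA, hbQ⟩ := hQ.2 (!c)
  have hnew : (t, b t) ∉ Q := fun h => ht ((ha₁.2 _ h).trans (ha₂.2 _ h).symm)
  have hgood : ∀ c', (A c' ∩ cube (insert (t, b t) Q)).Nonempty := by
    intro c'
    rcases Bool.eq_or_eq_not c' c with rfl | rfl
    · by_cases h₁ : a₁ t = b t
      · exact ⟨a₁, ha₁.1, mem_cube_insert.2 ⟨h₁, ha₁.2⟩⟩
      · have h₂ : a₂ t = b t :=
          (Bool.eq_not.2 (Ne.symm ht)).trans (Bool.eq_not.2 (Ne.symm h₁)).symm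
        exact ⟨a₂, ha₂.1, mem_cube_insert.2 ⟨h₂, ha₂.2⟩⟩
    · exact ⟨b, hbA, mem_cube_insert.2 ⟨rfl, hbQ⟩⟩
  have := hmax _ ⟨hQ.1.trans (subset_insert _ _), hgood⟩
  rw [card_insert_of_notMem hnew] at this
  omega

end Pins

/-- Normal form of the relations ppp-definable from `R`; contradictory pins give the empty
relation. -/
def IsPinnedProjection {r : ℕ} (R : BoolRel r) (S : Σ s, BoolRel s) : Prop :=
  ∃ (e : Fin S.1 → Fin r) (P : Finset (Fin r × Bool)), Injective e ∧
    S.2 = (· ∘ e) '' (R ∩ cube P)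

namespace IsPinnedProjection

variable {r : ℕ} {R : BoolRel r}

theorem refl : IsPinnedProjection R ⟨r, R⟩ :=
  ⟨id, ∅, injective_id, by ext; simp [cube]⟩

theorem of_pppStep {S T : Σ s, BoolRel s} (hS : IsPinnedProjection R S) (h : pppStep S T) :
    IsPinnedProjection R T := by
  obtain ⟨e, P, he, hSe⟩ := hS
  have hmem a : a ∈ S.2 ↔ a ∈ (· ∘ e) '' (R ∩ cube P) := Set.ext_iff.1 hSe a
  cases h with
  | perm S π =>
    refine ⟨e ∘ π.symm, P, he.comp π.symm.injective, ?_⟩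
    ext a
    simp only [hmem, Set.mem_ofPred_eq, Set.mem_image]
    refine exists_congr fun b => and_congr_right fun _ => ?_
    rw [← comp_assoc, Equiv.comp_symm_eq]
    rfl
  | pin S i c =>
    refine ⟨e, insert (e i, c) P, he, ?_⟩
    ext a
    simp only [hmem, Set.mem_ofPred_eq, Set.mem_image, Set.mem_inter_iff, mem_cube_insert]
    constructor
    · rintro ⟨⟨b, ⟨hbR, hbP⟩, rfl⟩, hc⟩
      exact ⟨b, ⟨hbR, hc, hbP⟩, rfl⟩
    · rintro ⟨b, ⟨hbR, hc, hbP⟩, rfl⟩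
      exact ⟨⟨b, ⟨hbR, hbP⟩, rfl⟩, hc⟩
  | proj S i =>
    refine ⟨e ∘ i.succAbove, P, he.comp Fin.succAbove_right_injective, ?_⟩
    ext a
    simp only [hmem, Set.mem_ofPred_eq, Set.mem_image]
    constructor
    · rintro ⟨_, ⟨b, hb, rfl⟩, rfl⟩
      exact ⟨b, hb, rfl⟩
    · rintro ⟨b, hb, rfl⟩
      exact ⟨b ∘ e, ⟨b, hb, rfl⟩, rfl⟩

theorem of_reflTransGen {T : Σ s, BoolRel s} (h : Relation.ReflTransGen pppStep ⟨r, R⟩ T) :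
    IsPinnedProjection R T := by
  induction h with
  | refl => exact refl
  | tail _ h ih => exact ih.of_pppStep h

end IsPinnedProjection

/-- `Step false` is `R_→`, which contains `R₌`; `Step true` is `R_≠`. -/
def Step : Bool → Bool → Bool → Prop
  | false, u, v => u = true → v = true
  | true, u, v => v = !u

theorem Step.imp_of_step {flip u v w : Bool} (h₁ : Step flip u v) (h₂ : Step flip v w) :
    u = true → w = true := by
  cases flip <;> cases u <;> cases v <;> cases w <;> simp_all [Step]

theorem Step.eq_xor_of_step {flip u v : Bool} (h₁ : Step flip u v) (h₂ : Step flip v u) :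
    v = xor u flip := by
  cases flip <;> cases u <;> cases v <;> simp_all [Step]

structure PinnedStep {r : ℕ} (R : BoolRel r) where
  pins : Finset (Fin r × Bool)
  i : Fin r
  j : Fin r
  flip : Bool
  tuple : Bool → Fin r → Bool
  i_ne_j : i ≠ j
  step : ∀ y ∈ R ∩ cube pins, Step flip (y i) (y j)
  tuple_mem : ∀ c, tuple c ∈ R ∩ cube pins
  tuple_i : ∀ c, tuple c i = c
  tuple_j : ∀ c, tuple c j = xor c flip
  eq_tuple : ∀ c, ∀ y ∈ R ∩ cube pins, y i = c → y j = xor c flip → y = tuple c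

namespace PinnedStep

variable {r : ℕ} {R : BoolRel r}

theorem nonempty_of_pppLE {Q : BoolRel 2} (flip : Bool) (hQR : pppLE Q R)
    (hmem : ∀ c, ![c, xor c flip] ∈ Q) (hstep : ∀ a ∈ Q, Step flip (a 0) (a 1)) :
    Nonempty (PinnedStep R) := by
  obtain ⟨e, P₀, he, hQ⟩ := IsPinnedProjection.of_reflTransGen hQR
  have hQ' (a) : a ∈ Q ↔ ∃ b ∈ R ∩ cube P₀, b ∘ e = a := Set.ext_iff.1 hQ a
  let A (c : Bool) : Set (Fin r → Bool) := {y | y ∈ R ∧ y (e 0) = c ∧ y (e 1) = xor c flip}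
  have hA c : (A c ∩ cube P₀).Nonempty := by
    obtain ⟨y, ⟨hyR, hyP⟩, hye⟩ := (hQ' _).1 (hmem c)
    exact ⟨y, ⟨hyR, congrFun hye 0, congrFun hye 1⟩, hyP⟩
  obtain ⟨P, hP, hsingle⟩ := exists_superset_inter_cube_eq_singleton A P₀ hA
  choose b hb using hsingle
  have hbA c : b c ∈ A c ∩ cube P := by simp [hb]
  refine ⟨⟨P, e 0, e 1, flip, b, he.ne Fin.zero_ne_one, fun y ⟨hyR, hyP⟩ => ?_,
    fun c => ⟨(hbA c).1.1, (hbA c).2⟩, fun c => (hbA c).1.2.1, fun c => (hbA c).1.2.2,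
    fun c y ⟨hyR, hyP⟩ hyi hyj => ?_⟩⟩
  · exact hstep _ ((hQ' _).2 ⟨y, ⟨hyR, cube_anti hP hyP⟩, rfl⟩)
  · have : y ∈ A c ∩ cube P := ⟨⟨hyR, hyi, hyj⟩, hyP⟩
    simpa [hb] using this

end PinnedStep

section Instances

variable {V W : Type}

def pinConstraint (v : V) (c : Bool) : Constraint V := ⟨1, {a | a 0 = c}, fun _ => v⟩

theorem pinConstraint_sat {v : V} {c : Bool} {σ : V → Bool} :
    (pinConstraint v c).sat σ ↔ σ v = c :=
  Iff.rfl

theorem pinConstraint_mem_pinLang (v : V) (c : Bool) :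
    (⟨(pinConstraint v c).arity, (pinConstraint v c).rel⟩ : Σ r, BoolRel r) ∈ pinLang := by
  cases c
  exacts [Or.inl rfl, Or.inr rfl]

noncomputable def CSPInstance.ofFintype {ι : Type} [Fintype ι] (C : ι → Constraint V) :
    CSPInstance V :=
  ⟨univ.toList.map C⟩

section OfFintype

variable {ι : Type} [Fintype ι] {C : ι → Constraint V}

theorem CSPInstance.sat_ofFintype {σ : V → Bool} :
    (CSPInstance.ofFintype C).sat σ ↔ ∀ x, (C x).sat σ := by
  simp [CSPInstance.sat, CSPInstance.ofFintype]

theorem CSPInstance.over_ofFintype {Γ : Set (Σ r, BoolRel r)} :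
    (CSPInstance.ofFintype C).over Γ ↔
      ∀ x, (⟨(C x).arity, (C x).rel⟩ : Σ r, BoolRel r) ∈ Γ := by
  simp [CSPInstance.over, CSPInstance.ofFintype]

theorem varDegree_ofFintype [DecidableEq V] (v : V) :
    varDegree (CSPInstance.ofFintype C) v = ∑ x, #{t | (C x).scope t = v} := by
  simp [varDegree, CSPInstance.ofFintype, Finset.sum_map_toList]

end OfFintype

def CSPInstance.map (f : V → W) (I : CSPInstance V) : CSPInstance W :=
  ⟨I.constraints.map fun c => ⟨c.arity, c.rel, f ∘ c.scope⟩⟩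

theorem CSPInstance.sat_map {f : V → W} {I : CSPInstance V} {σ : W → Bool} :
    (I.map f).sat σ ↔ I.sat (σ ∘ f) := by
  simp [CSPInstance.sat, CSPInstance.map, Constraint.sat]

theorem CSPInstance.over_map {f : V → W} {I : CSPInstance V} {Γ : Set (Σ r, BoolRel r)} :
    (I.map f).over Γ ↔ I.over Γ := by
  simp [CSPInstance.over, CSPInstance.map]

theorem varDegree_map_apply [DecidableEq V] [DecidableEq W] {f : V → W} (hf : Injective f)
    (I : CSPInstance V) (v : V) : varDegree (I.map f) (f v) = varDegree I v := by
  simp only [varDegree, CSPInstance.map, List.map_map]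
  congr 1
  refine List.map_congr_left fun c _ => ?_
  simp [hf.eq_iff]

end Instances

/-- `simulatesEqK` on an arbitrary variable type, `x` playing the role of the first `k`
variables. -/
def CSPInstance.SimulatesEqOn {V : Type} [DecidableEq V] (I : CSPInstance V)
    (Γ : Set (Σ r, BoolRel r)) (d : ℕ) {k : ℕ} (x : Fin k → V) : Prop :=
  I.over (Γ ∪ pinLang) ∧ (∀ v, varDegree I v ≤ d) ∧ (∀ a, varDegree I (x a) ≤ d - 1) ∧
    ∃ m, 1 ≤ m ∧ (∀ c, Nat.card {σ : V → Bool | I.sat σ ∧ ∀ a, σ (x a) = c} = m) ∧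
      ∀ σ, I.sat σ → ∃ c, ∀ a, σ (x a) = c

theorem exists_equiv_castAdd {V : Type} [Fintype V] {k : ℕ} (x : Fin k → V)
    (hx : Injective x) :
    ∃ (ℓ : ℕ) (e : Fin (k + ℓ) ≃ V), ∀ a, e (Fin.castAdd ℓ a) = x a := by
  classical
  let W := {v // v ∉ Set.range x}
  exact ⟨Fintype.card W, finSumFinEquiv.symm.trans <|
    (Equiv.sumCongr (Equiv.ofInjective x hx) (Fintype.equivFin W).symm).trans
      (Equiv.sumCompl (· ∈ Set.range x)), fun a => by simp [Equiv.sumCompl]⟩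

theorem CSPInstance.SimulatesEqOn.simulatesEqK {V : Type} [Fintype V] [DecidableEq V]
    {I : CSPInstance V} {Γ : Set (Σ r, BoolRel r)} {d k : ℕ} {x : Fin k → V}
    (hI : I.SimulatesEqOn Γ d x) (hx : Injective x) : simulatesEqK Γ d k := by
  obtain ⟨hover, hdeg, hdegx, m, hm, hcard, hconst⟩ := hI
  obtain ⟨ℓ, e, he⟩ := exists_equiv_castAdd x hx
  have hlow (σ : Fin (k + ℓ) → Bool) (c : Bool) :
      (∀ v : Fin (k + ℓ), (v : ℕ) < k → σ v = c) ↔ ∀ a, (σ ∘ e.symm) (x a) = c := by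
    simp only [comp_apply, ← he, Equiv.symm_apply_apply]
    exact ⟨fun h a => h _ a.isLt, fun h v hv => h ⟨v, hv⟩⟩
  have hsols (c : Bool) :
      Nat.card {σ : Fin (k + ℓ) → Bool | (I.map e.symm).sat σ ∧
        ∀ v : Fin (k + ℓ), (v : ℕ) < k → σ v = c} = m := by
    rw [← hcard c]
    exact Nat.card_congr <| (e.arrowCongr (Equiv.refl Bool)).subtypeEquiv fun σ => by
      simp only [Set.mem_ofPred_eq, CSPInstance.sat_map, hlow]
      rfl
  refine ⟨k + ℓ, le_add_right le_rfl, I.map e.symm, CSPInstance.over_map.2 hover,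
    fun v => ?_, fun v hv => ?_, m, hm, hsols false, hsols true, fun σ hσ => ?_⟩
  · simpa using (varDegree_map_apply e.symm.injective I (e v)).trans_le (hdeg (e v))
  · simpa [← he] using (varDegree_map_apply e.symm.injective I _).trans_le (hdegx ⟨v, hv⟩)
  · obtain ⟨c, hc⟩ := hconst _ (CSPInstance.sat_map.1 hσ)
    cases c
    exacts [Or.inl ((hlow σ _).2 hc), Or.inr ((hlow σ _).2 hc)]

open Fin.NatCast in
theorem Fin.forall_of_imp_add_one {n : ℕ} {p : Fin (n + 1) → Prop}
    (h : ∀ a, p a → p (a + 1)) {a : Fin (n + 1)} (ha : p a) (b : Fin (n + 1)) : p b := by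
  have key (m : ℕ) : p (a + (m : Fin (n + 1))) := by
    induction m with
    | zero => simpa using ha
    | succ m ih => simpa [add_assoc] using h _ ih
  simpa using key (b - a).val

abbrev CycleNode (n : ℕ) := Fin (n + 1) × Bool

def nextNode {n : ℕ} : CycleNode n → CycleNode n
  | (a, false) => (a, true)
  | (a, true) => (a + 1, false)

theorem nextNode_injective {n : ℕ} : Injective (nextNode (n := n)) := by
  rintro ⟨a, _ | _⟩ ⟨b, _ | _⟩ h <;> simp_all [nextNode]

def nodeVal {n : ℕ} (flip c : Bool) : CycleNode n → Bool
  | (_, s) => xor c (s && flip)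

theorem nodeVal_nextNode {n : ℕ} (flip c : Bool) (g : CycleNode n) :
    nodeVal flip c (nextNode g) = xor (nodeVal flip c g) flip := by
  obtain ⟨a, _ | _⟩ := g <;> cases flip <;> cases c <;> rfl

namespace PinnedStep

variable {r : ℕ} {R : BoolRel r} (G : PinnedStep R) (n : ℕ)

theorem ne_of_mem_pins {p : Fin r × Bool} (hp : p ∈ G.pins) : p.1 ≠ G.i ∧ p.1 ≠ G.j := by
  have h₀ := (G.tuple_mem false).2 p hp
  have h₁ := (G.tuple_mem true).2 p hp
  constructor <;> intro h <;> rw [h] at h₀ h₁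
  · rw [G.tuple_i] at h₀ h₁
    exact Bool.false_ne_true (h₀.trans h₁.symm)
  · rw [G.tuple_j] at h₀ h₁
    cases G.flip <;> simp_all

abbrev FreshVar := CycleNode n × {t : Fin r // t ≠ G.i ∧ t ≠ G.j}

abbrev Var := CycleNode n ⊕ G.FreshVar n

def scope (g : CycleNode n) (t : Fin r) : G.Var n :=
  if hi : t = G.i then .inl g
  else if hj : t = G.j then .inl (nextNode g)
  else .inr (g, ⟨t, hi, hj⟩)

def pinnedVar (q : CycleNode n × G.pins) : G.Var n :=
  .inr (q.1, ⟨q.2.1.1, G.ne_of_mem_pins q.2.2⟩)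

def constraint : CycleNode n ⊕ CycleNode n × G.pins → Constraint (G.Var n)
  | .inl g => ⟨r, R, G.scope n g⟩
  | .inr q => pinConstraint (G.pinnedVar n q) q.2.1.2

noncomputable def cycleCSP : CSPInstance (G.Var n) := .ofFintype (G.constraint n)

def designated (a : Fin (n + 1)) : G.Var n := .inl (a, false)

def solution (c : Bool) : G.Var n → Bool
  | .inl g => nodeVal G.flip c g
  | .inr (g, t) => G.tuple (nodeVal G.flip c g) t

theorem designated_injective : Injective (G.designated n) :=
  fun a b h => by simpa [designated] using h

variable {G n}

@[simp]
theorem scope_i (g : CycleNode n) : G.scope n g G.i = .inl g := by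
  simp [scope]

@[simp]
theorem scope_j (g : CycleNode n) : G.scope n g G.j = .inl (nextNode g) := by
  simp [scope, G.i_ne_j.symm]

@[simp]
theorem scope_fresh (g : CycleNode n) (t : {t : Fin r // t ≠ G.i ∧ t ≠ G.j}) :
    G.scope n g t = .inr (g, t) := by
  simp [scope, t.2.1, t.2.2]

theorem scope_eq_inl {g w : CycleNode n} {t : Fin r} (h : G.scope n g t = .inl w) :
    t = G.i ∧ g = w ∨ t = G.j ∧ nextNode g = w := by
  unfold scope at h
  split_ifs at h <;> simp_all

theorem scope_eq_inr {g : CycleNode n} {t : Fin r} {w : G.FreshVar n}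
    (h : G.scope n g t = .inr w) : (g, t) = (w.1, w.2.1) := by
  unfold scope at h
  split_ifs at h
  cases h
  rfl

theorem cycleCSP_over : (G.cycleCSP n).over ({⟨r, R⟩} ∪ pinLang) := by
  refine CSPInstance.over_ofFintype.2 fun x => ?_
  cases x with
  | inl g => exact Or.inl rfl
  | inr q => exact Or.inr (pinConstraint_mem_pinLang _ _)

section Solutions

variable {σ : G.Var n → Bool}

theorem edge_mem (hσ : (G.cycleCSP n).sat σ) (g : CycleNode n) :
    (fun t => σ (G.scope n g t)) ∈ R ∩ cube G.pins := by
  have hsat := CSPInstance.sat_ofFintype.1 hσ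
  refine ⟨hsat (.inl g), fun p hp => ?_⟩
  have hpin := pinConstraint_sat.1 (hsat (.inr (g, ⟨p, hp⟩)))
  show σ (G.scope n g p.1) = p.2
  rw [show p.1 = (⟨p.1, G.ne_of_mem_pins hp⟩ : {t : Fin r // t ≠ G.i ∧ t ≠ G.j}) from rfl,
    scope_fresh]
  exact hpin

theorem step_nextNode (hσ : (G.cycleCSP n).sat σ) (g : CycleNode n) :
    Step G.flip (σ (.inl g)) (σ (.inl (nextNode g))) := by
  simpa using G.step _ (edge_mem hσ g)

/-- Around the cycle, each simulated variable implies the next one. -/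
theorem designated_eq (hσ : (G.cycleCSP n).sat σ) (a b : Fin (n + 1)) :
    σ (G.designated n a) = σ (G.designated n b) := by
  have hnext a : σ (G.designated n a) = true → σ (G.designated n (a + 1)) = true :=
    (step_nextNode hσ (a, false)).imp_of_step (step_nextNode hσ (a, true))
  rw [Bool.eq_iff_iff]
  exact ⟨fun h => Fin.forall_of_imp_add_one hnext h b,
    fun h => Fin.forall_of_imp_add_one hnext h a⟩

theorem node_eq_nodeVal (hσ : (G.cycleCSP n).sat σ) {c : Bool}
    (hc : ∀ a, σ (G.designated n a) = c) (g : CycleNode n) :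
    σ (.inl g) = nodeVal G.flip c g := by
  obtain ⟨a, _ | _⟩ := g
  · simpa [nodeVal, designated] using hc a
  · have h₁ := step_nextNode hσ (a, false)
    have h₂ := step_nextNode hσ (a, true)
    simp only [nextNode] at h₁ h₂
    rw [← designated, hc] at h₁
    rw [← designated, hc] at h₂
    simpa [nodeVal] using Step.eq_xor_of_step h₁ h₂

theorem eq_solution (hσ : (G.cycleCSP n).sat σ) {c : Bool}
    (hc : ∀ a, σ (G.designated n a) = c) : σ = G.solution n c := by
  funext v
  rcases v with g | ⟨g, t⟩
  · exact node_eq_nodeVal hσ hc g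
  · have hnode := node_eq_nodeVal hσ hc
    have htuple := G.eq_tuple _ _ (edge_mem hσ g) (by simpa using hnode g)
      (by simpa [nodeVal_nextNode] using hnode (nextNode g))
    simpa [solution] using congrFun htuple t

end Solutions

theorem solution_sat (c : Bool) : (G.cycleCSP n).sat (G.solution n c) := by
  refine CSPInstance.sat_ofFintype.2 fun x => ?_
  rcases x with g | ⟨g, p, hp⟩
  · have : (fun t => G.solution n c (G.scope n g t)) = G.tuple (nodeVal G.flip c g) := by
      funext t
      by_cases hi : t = G.i
      · subst hi; simp [solution, G.tuple_i]
      by_cases hj : t = G.j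
      · subst hj; simp [solution, G.tuple_j, nodeVal_nextNode]
      · simpa [solution] using congrArg (G.solution n c) (scope_fresh g ⟨t, hi, hj⟩)
    change (fun t => G.solution n c (G.scope n g t)) ∈ R
    rw [this]
    exact (G.tuple_mem _).1
  · exact (G.tuple_mem _).2 p hp

theorem varDegree_cycleCSP (v : G.Var n) :
    varDegree (G.cycleCSP n) v =
      #{p : CycleNode n × Fin r | G.scope n p.1 p.2 = v} + #{q | G.pinnedVar n q = v} := by
  rw [cycleCSP, varDegree_ofFintype, Fintype.sum_sum_type]
  congr 1
  · rw [eq_comm, card_filter, Fintype.sum_prod_type]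
    simp only [card_filter]
    rfl
  · rw [card_filter]
    refine sum_congr rfl fun q _ => ?_
    by_cases h : G.pinnedVar n q = v
    · simp [constraint, pinConstraint, h]
      rfl
    · simp [constraint, pinConstraint, h]

/-- A cycle node occurs in at most two positions: column `i` of its own copy of `R` and
column `j` of the preceding one. -/
theorem varDegree_inl_le (w : CycleNode n) : varDegree (G.cycleCSP n) (.inl w) ≤ 2 := by
  have hpins : #{q | G.pinnedVar n q = .inl w} = 0 := by simp [pinnedVar]
  rw [varDegree_cycleCSP, hpins, add_zero]
  refine (card_le_card_of_injOn Prod.snd (t := {G.i, G.j}) ?_ ?_).trans card_le_two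
  · intro p hp
    rcases scope_eq_inl (mem_filter.1 hp).2 with ⟨h, -⟩ | ⟨h, -⟩ <;> simp [h]
  · rintro ⟨g, t⟩ hg ⟨g', t'⟩ hg' (rfl : t = t')
    rcases scope_eq_inl (mem_filter.1 hg).2 with ⟨hi, hgw⟩ | ⟨hj, hgw⟩ <;>
      rcases scope_eq_inl (mem_filter.1 hg').2 with ⟨hi', hgw'⟩ | ⟨hj', hgw'⟩
    · exact Prod.ext (hgw.trans hgw'.symm) rfl
    · exact absurd (hi.symm.trans hj') G.i_ne_j
    · exact absurd (hi'.symm.trans hj) G.i_ne_j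
    · exact Prod.ext (nextNode_injective (hgw.trans hgw'.symm)) rfl

/-- A fresh variable occurs once in its copy of `R` and at most once per pinned value. -/
theorem varDegree_inr_le (w : G.FreshVar n) : varDegree (G.cycleCSP n) (.inr w) ≤ 3 := by
  have hedge : #{p : CycleNode n × Fin r | G.scope n p.1 p.2 = .inr w} ≤ 1 :=
    card_le_one.2 fun p hp p' hp' =>
      (scope_eq_inr (mem_filter.1 hp).2).trans (scope_eq_inr (mem_filter.1 hp').2).symm
  have hpins : #{q | G.pinnedVar n q = .inr w} ≤ 2 := by
    refine (card_le_card_of_injOn (fun q => q.2.1.2) (t := univ)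
      (fun _ _ => mem_coe.2 (mem_univ _)) fun q hq q' hq' hc => ?_).trans (by simp)
    have h := (mem_filter.1 hq).2.trans (mem_filter.1 hq').2.symm
    simp only [pinnedVar, Sum.inr.injEq, Prod.mk.injEq, Subtype.mk.injEq] at h
    exact Prod.ext h.1 (Subtype.ext (Prod.ext h.2 hc))
  rw [varDegree_cycleCSP]
  omega

variable (G n)

theorem simulatesEqOn : (G.cycleCSP n).SimulatesEqOn {⟨r, R⟩} 3 (G.designated n) := by
  refine ⟨cycleCSP_over, fun v => ?_, fun a => varDegree_inl_le _, 1, le_rfl, fun c => ?_,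
    fun σ hσ => ⟨σ (G.designated n 0), fun a => designated_eq hσ a 0⟩⟩
  · rcases v with w | w
    · exact (varDegree_inl_le w).trans (by norm_num)
    · exact varDegree_inr_le w
  · have hsols :
        {σ | (G.cycleCSP n).sat σ ∧ ∀ a, σ (G.designated n a) = c} = {G.solution n c} := by
      ext σ
      constructor
      · rintro ⟨hσ, hc⟩
        exact eq_solution hσ hc
      · rintro rfl
        exact ⟨solution_sat c, fun a => by simp [solution, designated, nodeVal]⟩
    rw [hsols, Nat.card_coe_set_eq, Set.ncard_singleton]

end PinnedStep

/-- If `R₌ ≤ppp R`, or `R₍≠₎ ≤ppp R`, or `R₍→₎ ≤ppp R`, then `R` 3-simulates equality. -/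
theorem simulates_equality_of_ppp_eq_neq_imp (r : ℕ) (R : BoolRel r)
    (h : pppLE Req R ∨ pppLE Rneq R ∨ pppLE Rimp R) :
    relSimulatesEq R 3 := by
  obtain ⟨G⟩ : Nonempty (PinnedStep R) := by
    rcases h with h | h | h
    · exact PinnedStep.nonempty_of_pppLE false h (fun c => by simp [Req])
        fun a (ha : a 0 = a 1) => by simp [Step, ha]
    · exact PinnedStep.nonempty_of_pppLE true h (fun c => by simp [Rneq])
        fun a (ha : a 0 ≠ a 1) => Bool.eq_not.2 (Ne.symm ha)
    · exact PinnedStep.nonempty_of_pppLE false h (fun c => by simp [Rimp]) fun a ha => ha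
  intro k hk
  obtain ⟨n, rfl⟩ : ∃ n, k = n + 1 := ⟨k - 1, by omega⟩
  exact (G.simulatesEqOn n).simulatesEqK (G.designated_injective n)
end

section
/- If R is an IM-conj Boolean relation that is not affine, then R_→ ≤ppp R. -/
/-! Every implication `x_i → x_j` valid in an IM-conj relation `R` either projects onto `R_→`
(the patterns `00`, `01`, `11` all occur in columns `i, j`) or is forced by a constant column or by
two equal columns. If no implication projects onto `R_→`, then `R` is cut out by its constant
columns and equal column pairs, that is, by linear equations over GF(2). -/

def restrictRel {r s : ℕ} (R : BoolRel r) (f : Fin s → Fin r) : BoolRel s :=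
  {a | ∃ b ∈ R, a = fun j => b (f j)}

lemma restrictRel_comp {r s t : ℕ} (R : BoolRel r) (f : Fin s → Fin r) (g : Fin t → Fin s) :
    restrictRel (restrictRel R f) g = restrictRel R (f ∘ g) := by
  ext a
  constructor
  · rintro ⟨_, ⟨b, hb, rfl⟩, rfl⟩
    exact ⟨b, hb, rfl⟩
  · rintro ⟨b, hb, rfl⟩
    exact ⟨_, ⟨b, hb, rfl⟩, rfl⟩

lemma pppLE_restrictRel_of_bijective {r s : ℕ} (R : BoolRel r) {f : Fin s → Fin r}
    (hf : Function.Bijective f) : pppLE (restrictRel R f) R := by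
  obtain rfl : s = r := by simpa using Fintype.card_congr (Equiv.ofBijective f hf)
  set e := Equiv.ofBijective f hf
  have hperm : restrictRel R f = {a | (fun i => a (e.symm i)) ∈ R} := by
    ext a
    constructor
    · rintro ⟨b, hb, rfl⟩
      simpa [e, Equiv.ofBijective_apply_symm_apply] using hb
    · exact fun ha => ⟨_, ha, funext fun j => by simp [e]⟩
  rw [pppLE, hperm]
  exact .single (pppStep.perm R e.symm)

/-- Selecting distinct columns is a composition of column projections and one permutation. -/
lemma pppLE_restrictRel {r s : ℕ} (R : BoolRel r) {f : Fin s → Fin r}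
    (hf : Function.Injective f) : pppLE (restrictRel R f) R := by
  induction r with
  | zero => exact pppLE_restrictRel_of_bijective R ⟨hf, fun y => y.elim0⟩
  | succ r ih =>
    by_cases hs : Function.Surjective f
    · exact pppLE_restrictRel_of_bijective R ⟨hf, hs⟩
    obtain ⟨k, hk⟩ := not_forall.1 hs
    choose g hg using fun j => Fin.exists_succAbove_eq (x := f j) (y := k) fun h => hk ⟨j, h⟩
    have hfg : f = k.succAbove ∘ g := funext fun j => (hg j).symm
    have hg_inj : Function.Injective g := (hfg ▸ hf).of_comp
    rw [hfg, ← restrictRel_comp]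
    exact .head (pppStep.proj R k) (ih _ hg_inj)

/-- Columns `i` and `j` of `R` realise exactly the implication `x_i → x_j`. -/
def NondegenerateImp {r : ℕ} (R : BoolRel r) (i j : Fin r) : Prop :=
  (∀ a ∈ R, a i = true → a j = true) ∧ (∃ a ∈ R, a j = false) ∧
    (∃ a ∈ R, a i = false ∧ a j = true) ∧ (∃ a ∈ R, a i = true)

namespace NondegenerateImp

variable {r : ℕ} {R : BoolRel r} {i j : Fin r}

lemma ne (h : NondegenerateImp R i j) : i ≠ j := by
  rintro rfl
  obtain ⟨a, -, hi, hj⟩ := h.2.2.1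
  simp [hi] at hj

lemma restrictRel_eq (h : NondegenerateImp R i j) : restrictRel R ![i, j] = Rimp := by
  obtain ⟨himp, ⟨a₀₀, ha₀₀, ha₀₀j⟩, ⟨a₀₁, ha₀₁, ha₀₁i, ha₀₁j⟩, ⟨a₁₁, ha₁₁, ha₁₁i⟩⟩ := h
  suffices hex : ∀ x y : Bool, (x = true → y = true) → ∃ b ∈ R, b i = x ∧ b j = y by
    ext a
    constructor
    · rintro ⟨b, hb, rfl⟩
      simpa [Rimp] using himp b hb
    · intro ha
      obtain ⟨b, hb, hbi, hbj⟩ := hex (a 0) (a 1) ha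
      exact ⟨b, hb, funext fun t => by fin_cases t <;> simp [hbi, hbj]⟩
  rintro (_ | _) (_ | _) hxy
  · refine ⟨a₀₀, ha₀₀, ?_, ha₀₀j⟩
    by_contra hi
    simpa [ha₀₀j] using himp a₀₀ ha₀₀ (by simpa using hi)
  · exact ⟨a₀₁, ha₀₁, ha₀₁i, ha₀₁j⟩
  · simp at hxy
  · exact ⟨a₁₁, ha₁₁, ha₁₁i, himp a₁₁ ha₁₁ ha₁₁i⟩

lemma pppLE_Rimp (h : NondegenerateImp R i j) : pppLE Rimp R := by
  rw [← h.restrictRel_eq]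
  exact pppLE_restrictRel R
    (Fin.cons_injective_iff.2 ⟨by simpa using h.ne, Function.injective_of_subsingleton _⟩)

end NondegenerateImp

structure SatisfiesPinsEqsOf {r : ℕ} (R : BoolRel r) (a : Fin r → Bool) : Prop where
  pin : ∀ i c, (∀ b ∈ R, b i = c) → a i = c
  eq : ∀ i j, (∀ b ∈ R, b i = b j) → a i = a j

lemma zmod2_ite_eq_ite_iff (x y : Bool) :
    ((if x then 1 else 0 : ZMod 2) = if y then 1 else 0) ↔ x = y := by
  cases x <;> cases y <;> decide

lemma zmod2_ite_add_ite_eq_zero_iff (x y : Bool) :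
    ((if x then 1 else 0 : ZMod 2) + (if y then 1 else 0) = 0) ↔ x = y := by
  cases x <;> cases y <;> decide

lemma affineRel_of_forall_satisfiesPinsEqsOf {r : ℕ} {R : BoolRel r}
    (h : ∀ a, SatisfiesPinsEqsOf R a → a ∈ R) : AffineRel R := by
  refine ⟨{e | (∃ i, e.1 = {i} ∧ ∀ b ∈ R, b i = e.2) ∨
      (∃ i j, i ≠ j ∧ e.1 = {i, j} ∧ e.2 = false ∧ ∀ b ∈ R, b i = b j)}, fun a => ⟨?_, ?_⟩⟩
  · rintro haR e (⟨i, he, hc⟩ | ⟨i, j, hij, he, hc, heq⟩)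
    · rw [he, Finset.sum_singleton, hc a haR]
    · rw [he, hc, Finset.sum_pair hij]
      simpa using (zmod2_ite_add_ite_eq_zero_iff _ _).2 (heq a haR)
  · intro ha
    refine h a ⟨fun i c hc => ?_, fun i j hc => ?_⟩
    · have := ha ({i}, c) (.inl ⟨i, rfl, hc⟩)
      rwa [Finset.sum_singleton, zmod2_ite_eq_ite_iff] at this
    · rcases eq_or_ne i j with rfl | hij
      · rfl
      have := ha ({i, j}, false) (.inr ⟨i, j, hij, rfl, rfl, hc⟩)
      rw [Finset.sum_pair hij] at this
      exact (zmod2_ite_add_ite_eq_zero_iff _ _).1 (by simpa using this)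

/-- A valid implication of `R` that is not realised nondegenerately is implied by a constant
column or by an equality of columns. -/
lemma SatisfiesPinsEqsOf.imp {r : ℕ} {R : BoolRel r} {a : Fin r → Bool}
    (ha : SatisfiesPinsEqsOf R a) {i j : Fin r} (himp : ∀ b ∈ R, b i = true → b j = true)
    (hnd : ¬ NondegenerateImp R i j) : a i = true → a j = true := by
  intro hai
  by_cases h₀₁ : ∃ b ∈ R, b i = false ∧ b j = true
  · by_cases h₁₁ : ∃ b ∈ R, b i = true
    · have h₀₀ : ∀ b ∈ R, b j = true := by
        by_contra! h₀₀
        exact hnd ⟨himp, by simpa using h₀₀, h₀₁, h₁₁⟩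
      exact ha.pin j true h₀₀
    · have : a i = false :=
        ha.pin i false fun b hb => by simpa using fun h => h₁₁ ⟨b, hb, h⟩
      simp [hai] at this
  · have hij : ∀ b ∈ R, b i = b j := by
      intro b hb
      cases hbi : b i
      · by_contra hbj
        exact h₀₁ ⟨b, hb, hbi, by simpa using (Ne.symm hbj)⟩
      · exact (himp b hb hbi).symm
    rw [← ha.eq i j hij, hai]

lemma IMConj.mem_of_satisfiesPinsEqsOf {r : ℕ} {R : BoolRel r} (him : IMConj R)
    (hnd : ∀ i j, ¬ NondegenerateImp R i j) {a : Fin r → Bool} (ha : SatisfiesPinsEqsOf R a) :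
    a ∈ R := by
  obtain ⟨P, Imp, hdef⟩ := him
  rw [hdef]
  exact ⟨fun p hp => ha.pin p.1 p.2 fun b hb => ((hdef b).1 hb).1 p hp,
    fun q hq => ha.imp (fun b hb => ((hdef b).1 hb).2 q hq) (hnd q.1 q.2)⟩

/-- If `R` is IM-conj but not affine, then `R₍→₎ ≤ppp R`. -/
theorem imp_ppp_of_IMconj_not_affine (r : ℕ) (R : BoolRel r)
    (him : IMConj R) (haff : ¬ AffineRel R) :
    pppLE Rimp R := by
  by_contra hR
  have hnd : ∀ i j, ¬ NondegenerateImp R i j := fun i j h => hR h.pppLE_Rimp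
  exact haff (affineRel_of_forall_satisfiesPinsEqsOf fun _ => him.mem_of_satisfiesPinsEqsOf hnd)
end

section
/- If R ≤ppp R' for Boolean relations R and R', then R can be obtained from R' in normal form: first applying a single permutation of columns, then a sequence of pinnings, and then a sequence of projections. -/
/-!
A projection followed by a pin is the pin of the corresponding column of the larger relation
followed by the projection, so pins can be moved before projections. A permutation of the columns
kept so far extends, along the order embedding of kept columns, to a permutation of all columns of
`R'`; relabelling the pins made so far along it absorbs it into the initial permutation.
-/

namespace BoolRel

variable {r' s : ℕ}

def normalForm (R' : BoolRel r') (π : Equiv.Perm (Fin r')) (P : Set (Fin r' × Bool))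
    (keep : Fin s → Fin r') : BoolRel s :=
  {a | ∃ b : Fin r' → Bool,
    ((fun i => b (π i)) ∈ R') ∧ (∀ p ∈ P, b p.1 = p.2) ∧ a = fun j => b (keep j)}

variable (R' : BoolRel r') (π : Equiv.Perm (Fin r')) (P : Set (Fin r' × Bool))

theorem normalForm_one_empty : normalForm R' 1 ∅ id = R' := by
  ext a
  simp [normalForm]

theorem normalForm_relabel (τ : Equiv.Perm (Fin r')) (keep : Fin s → Fin r') :
    normalForm R' π P keep = normalForm R' (π.trans τ) (Prod.map τ id '' P) (τ ∘ keep) := by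
  ext a
  constructor
  · rintro ⟨b, hb, hP, rfl⟩
    refine ⟨b ∘ τ.symm, by simpa using hb, ?_, by simp⟩
    rintro _ ⟨p, hp, rfl⟩
    simpa using hP p hp
  · rintro ⟨b, hb, hP, rfl⟩
    exact ⟨b ∘ τ, hb, fun p hp => hP _ (Set.mem_image_of_mem _ hp), rfl⟩

theorem permute_normalForm (σ : Equiv.Perm (Fin s)) (keep : Fin s → Fin r') :
    {a | (fun i => a (σ i)) ∈ normalForm R' π P keep} = normalForm R' π P (keep ∘ σ.symm) := by
  ext a
  constructor
  · rintro ⟨b, hb, hP, hab⟩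
    refine ⟨b, hb, hP, funext fun j => ?_⟩
    simpa using congrFun hab (σ.symm j)
  · rintro ⟨b, hb, hP, rfl⟩
    exact ⟨b, hb, hP, by simp⟩

theorem pin_normalForm (keep : Fin s → Fin r') (i : Fin s) (c : Bool) :
    {a | a ∈ normalForm R' π P keep ∧ a i = c} = normalForm R' π (insert (keep i, c) P) keep := by
  ext a
  constructor
  · rintro ⟨⟨b, hb, hP, rfl⟩, rfl⟩
    exact ⟨b, hb, Set.forall_mem_insert.2 ⟨rfl, hP⟩, rfl⟩
  · rintro ⟨b, hb, hP, rfl⟩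
    exact ⟨⟨b, hb, fun p hp => hP p (Set.mem_insert_of_mem _ hp), rfl⟩, hP _ (Set.mem_insert _ _)⟩

theorem project_normalForm (keep : Fin (s + 1) → Fin r') (i : Fin (s + 1)) :
    {a | ∃ b ∈ normalForm R' π P keep, a = fun j => b (i.succAbove j)} =
      normalForm R' π P (keep ∘ i.succAbove) := by
  ext a
  constructor
  · rintro ⟨_, ⟨b, hb, hP, rfl⟩, rfl⟩
    exact ⟨b, hb, hP, rfl⟩
  · rintro ⟨b, hb, hP, rfl⟩
    exact ⟨_, ⟨b, hb, hP, rfl⟩, rfl⟩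

def HasNormalForm (R' : BoolRel r') (R : BoolRel s) : Prop :=
  ∃ (π : Equiv.Perm (Fin r')) (P : Set (Fin r' × Bool)) (keep : Fin s ↪o Fin r'),
    R = normalForm R' π P keep

theorem hasNormalForm_self : HasNormalForm R' R' :=
  ⟨1, ∅, RelEmbedding.refl _, (normalForm_one_empty R').symm⟩

variable {R'}

theorem HasNormalForm.pppStep {S T : Σ s, BoolRel s} (hS : HasNormalForm R' S.2)
    (hST : pppStep S T) : HasNormalForm R' T.2 := by
  cases hST with
  | perm _ σ =>
    dsimp only at hS
    obtain ⟨π, P, keep, rfl⟩ := hS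
    let τ := Equiv.Perm.viaFintypeEmbedding σ keep.toEmbedding
    have hτ : τ ∘ keep ∘ σ.symm = keep := funext fun j => by
      simpa [τ] using Equiv.Perm.viaFintypeEmbedding_apply_image σ keep.toEmbedding (σ.symm j)
    refine ⟨π.trans τ, Prod.map τ id '' P, keep, ?_⟩
    rw [permute_normalForm, normalForm_relabel R' π P τ]
    exact congrArg (normalForm R' _ _) hτ
  | pin _ i c =>
    dsimp only at hS
    obtain ⟨π, P, keep, rfl⟩ := hS
    exact ⟨π, insert (keep i, c) P, keep, pin_normalForm R' π P keep i c⟩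
  | proj _ i =>
    dsimp only at hS
    obtain ⟨π, P, keep, rfl⟩ := hS
    exact ⟨π, P, (Fin.succAboveOrderEmb i).trans keep, project_normalForm R' π P keep i⟩

theorem hasNormalForm_of_reflTransGen {S : Σ s, BoolRel s}
    (h : Relation.ReflTransGen pppStep ⟨r', R'⟩ S) : HasNormalForm R' S.2 := by
  induction h with
  | refl => exact hasNormalForm_self R'
  | tail _ hST ih => exact ih.pppStep hST

end BoolRel

/-- Normal form for ppp-definability: if `R ≤ppp R'` then `R` is obtained from `R'`
by first permuting the columns, then making some pins, and then projecting (i.e.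
keeping a subset of the columns, in order). -/
theorem pppLE_normal_form (r r' : ℕ) (R : BoolRel r) (R' : BoolRel r')
    (h : pppLE R R') :
    ∃ (π : Equiv.Perm (Fin r')) (P : Set (Fin r' × Bool)) (keep : Fin r ↪o Fin r'),
      R = {a | ∃ b : Fin r' → Bool,
        ((fun i => b (π i)) ∈ R') ∧ (∀ p ∈ P, b p.1 = p.2) ∧ a = fun j => b (keep j)} :=
  BoolRel.hasNormalForm_of_reflTransGen h
end

section
/- Let R_0 ⊆ R_1 be r-ary OR-conj relations such that the (r+1)-ary relation R = R_0 + R_1 has no constant columns and every constant column of R_0 is constant with value 1. Then R is an OR-conj relation. -/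
/-!
Because `R₀ ⊆ R₁`, a tuple `x₀a` lies in `R₀ + R₁` exactly when `a ∈ R₁` and (`x₀ = 1` or
`a ∈ R₀`). A pin of `R₀` makes its column constant, so by hypothesis it pins to `1` and is a unit
OR, unless `R₀ = ∅`, which is the empty OR. Hence `R₀` is a conjunction of ORs `C`, and
`x₀ ∨ R₀` is the conjunction of the ORs `x₀ ∨ C`.
-/

section

variable {r : ℕ}

def DefinedByORs (R : BoolRel r) (Cl : Set (Set (Fin r))) : Prop :=
  ∀ a, a ∈ R ↔ ∀ C ∈ Cl, ∃ i ∈ C, a i = true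

theorem constCol_of_mem_pins {R : BoolRel r} {P : Set (Fin r × Bool)} {Cl : Set (Set (Fin r))}
    (hR : ∀ a, a ∈ R ↔ (∀ p ∈ P, a p.1 = p.2) ∧ ∀ C ∈ Cl, ∃ i ∈ C, a i = true)
    {p : Fin r × Bool} (hp : p ∈ P) : constCol R p.1 :=
  fun a ha b hb => (((hR a).1 ha).1 p hp).trans (((hR b).1 hb).1 p hp).symm

theorem ORConj.exists_definedByORs {R : BoolRel r} (hR : ORConj R)
    (hones : ∀ i, constCol R i → ∀ a ∈ R, a i = true) :
    ∃ Cl, DefinedByORs R Cl := by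
  obtain ⟨P, Cl, -, hdef⟩ := hR
  refine ⟨Cl ∪ (fun p => {i | i = p.1 ∧ p.2 = true}) '' P, fun a => ?_⟩
  rw [hdef]
  simp only [Set.forall_mem_image, Set.mem_union, or_imp, forall_and, Set.mem_ofPred_eq, and_assoc,
    exists_eq_left]
  have hone : (∀ p ∈ P, a p.1 = p.2) → (∀ C ∈ Cl, ∃ i ∈ C, a i = true) → ∀ p ∈ P, a p.1 = true :=
    fun hP hCl p hp => hones p.1 (constCol_of_mem_pins hdef hp) a ((hdef a).2 ⟨hP, hCl⟩)
  constructor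
  · rintro ⟨hP, hCl⟩
    exact ⟨hCl, fun p hp => (hP p hp).symm.trans (hone hP hCl p hp), hone hP hCl⟩
  · rintro ⟨hCl, hpos, hP⟩
    exact ⟨fun p hp => (hP p hp).trans (hpos p hp).symm, hCl⟩

theorem mem_relSum_iff_of_subset {R0 R1 : BoolRel r} (hsub : R0 ⊆ R1) (a : Fin (r + 1) → Bool) :
    a ∈ relSum R0 R1 ↔ (fun i => a i.succ) ∈ R1 ∧ (a 0 = true ∨ (fun i => a i.succ) ∈ R0) := by
  cases h : a 0 <;> simp only [relSum, Set.mem_ofPred_eq, h] <;> grind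

theorem ORConj.relSum_of_definedByORs {R0 R1 : BoolRel r} {Cl0 : Set (Set (Fin r))}
    (hR1 : ORConj R1) (hR0 : DefinedByORs R0 Cl0) (hsub : R0 ⊆ R1) :
    ORConj (relSum R0 R1) := by
  obtain ⟨P1, Cl1, hCl1, hdef1⟩ := hR1
  refine ⟨Prod.map Fin.succ id '' P1,
    Set.image Fin.succ '' Cl1 ∪ (fun C => insert 0 (Fin.succ '' C)) '' Cl0, ?_, fun a => ?_⟩
  · rintro _ (⟨C, hC, rfl⟩ | ⟨C, -, rfl⟩)
    · exact (hCl1 C hC).image _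
    · exact Set.insert_nonempty _ _
  · rw [mem_relSum_iff_of_subset hsub, hdef1, hR0]
    simp only [Set.forall_mem_image, Set.mem_union, or_imp, forall_and, Set.exists_mem_insert,
      Set.exists_mem_image, forall_or_left, and_assoc]
    rfl

end

theorem relSum_ORconj_of_subset_general (r : ℕ) (R0 R1 : BoolRel r)
    (h0 : ORConj R0) (h1 : ORConj R1) (hsub : R0 ⊆ R1)
    (hones : ∀ i : Fin r, constCol R0 i → ∀ a ∈ R0, a i = true) :
    ORConj (relSum R0 R1) := by
  obtain ⟨Cl0, hCl0⟩ := h0.exists_definedByORs hones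
  exact h1.relSum_of_definedByORs hCl0 hsub

/-- If `R₀ ⊆ R₁` are `r`-ary OR-conj relations, `R₀ + R₁` has no constant columns and
every constant column of `R₀` is constant with value 1, then `R₀ + R₁` is OR-conj. -/
theorem relSum_ORconj_of_subset (r : ℕ) (R0 R1 : BoolRel r)
    (h0 : ORConj R0) (h1 : ORConj R1) (hsub : R0 ⊆ R1)
    (hnc : ∀ i : Fin (r + 1), ¬ constCol (relSum R0 R1) i)
    (hones : ∀ i : Fin r, constCol R0 i → ∀ a ∈ R0, a i = true) :
    ORConj (relSum R0 R1) :=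
  relSum_ORconj_of_subset_general r R0 R1 h0 h1 hsub hones
end
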